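/- arXiv:1708.04640 — 2 statements merged into one kernel-verified Lean document; each statement's English description precedes it below -/
import Mathlib

section
/- Let G = (V,E) be a finite simple graph, r ≥ 0 an integer, and c : E → ℝ a proper edge colouring of G. Then m_e(G,r) ≥ dim(W^r_{G,c}); that is, the minimum size of a percolating edge set in the r-bond bootstrap process on G is at least the dimension of the vector space W^r_{G,c}. -/
open Polynomial

/-- A set `S` of edges is closed under the `r`-bond bootstrap infection rule: whenever a
vertex `v` is incident to at least `r` edges in `S`, all edges incident to `v` are in `S`. -/
def BondClosed {V : Type*} (G : SimpleGraph V) (r : ℕ) (S : Set (Sym2 V)) : Prop :=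
  ∀ v : V, r ≤ {u | G.Adj v u ∧ s(v, u) ∈ S}.ncard → ∀ w : V, G.Adj v w → s(v, w) ∈ S

/-- `F` percolates in the `r`-bond bootstrap process on `G`: every set of edges containing `F`
that is closed under the infection rule contains all edges of `G`. -/
def BondPercolates {V : Type*} (G : SimpleGraph V) (r : ℕ) (F : Set (Sym2 V)) : Prop :=
  ∀ S : Set (Sym2 V), F ⊆ S → BondClosed G r S → G.edgeSet ⊆ S

/-- `mEdge G r` is the minimum size of a set of edges of `G` percolating in the `r`-bond
bootstrap process, i.e. `m_e(G,r)`. -/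
noncomputable def mEdge {V : Type*} (G : SimpleGraph V) (r : ℕ) : ℕ :=
  sInf {n | ∃ F : Finset (Sym2 V), ↑F ⊆ G.edgeSet ∧ BondPercolates G r ↑F ∧ F.card = n}

/-- A set `S` of vertices is closed under the `r`-neighbour bootstrap infection rule. -/
def NeighClosed {V : Type*} (G : SimpleGraph V) (r : ℕ) (S : Set V) : Prop :=
  ∀ v : V, r ≤ {u | G.Adj v u ∧ u ∈ S}.ncard → v ∈ S

/-- `A` percolates in the `r`-neighbour bootstrap process on `G`. -/
def NeighPercolates {V : Type*} (G : SimpleGraph V) (r : ℕ) (A : Set V) : Prop :=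
  ∀ S : Set V, A ⊆ S → NeighClosed G r S → ∀ v : V, v ∈ S

/-- `mVertex G r` is the minimum size of a percolating set of vertices for the `r`-neighbour
bootstrap process, i.e. `m(G,r)`. -/
noncomputable def mVertex {V : Type*} (G : SimpleGraph V) (r : ℕ) : ℕ :=
  sInf {n | ∃ A : Finset V, NeighPercolates G r ↑A ∧ A.card = n}

/-- `c` is a proper edge colouring of `G`: distinct edges sharing an endpoint get distinct
colours. -/
def ProperEdgeColouring {V : Type*} (G : SimpleGraph V) (c : Sym2 V → ℝ) : Prop :=
  ∀ e₁ ∈ G.edgeSet, ∀ e₂ ∈ G.edgeSet, e₁ ≠ e₂ → (∃ v : V, v ∈ e₁ ∧ v ∈ e₂) → c e₁ ≠ c e₂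

/-- The space `W^r_{G,c}` of functions on edges recognized by systems of polynomials of degree
at most `r - 1` (degree `< r`) attached to the vertices. Functions are represented as functions
on `Sym2 V` vanishing outside the edge set of `G`. -/
noncomputable def Wspace {V : Type*} (G : SimpleGraph V) (c : Sym2 V → ℝ) (r : ℕ) :
    Submodule ℝ (Sym2 V → ℝ) where
  carrier := {φ | (∀ e, e ∉ G.edgeSet → φ e = 0) ∧
    ∃ p : V → ℝ[X], (∀ v, (p v).degree < (r : WithBot ℕ)) ∧
      ∀ v w : V, G.Adj v w → (p v).eval (c s(v, w)) = φ s(v, w)}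
  zero_mem' := ⟨fun _ _ => rfl, fun _ => 0,
    fun _ => by simp [Polynomial.degree_zero], fun _ _ _ => by simp⟩
  add_mem' := by
    rintro φ ψ ⟨hφ0, p, hp, hpe⟩ ⟨hψ0, q, hq, hqe⟩
    exact ⟨fun e he => by simp [hφ0 e he, hψ0 e he], fun v => p v + q v,
      fun v => lt_of_le_of_lt (Polynomial.degree_add_le _ _) (max_lt (hp v) (hq v)),
      fun v w hvw => by simp [hpe v w hvw, hqe v w hvw]⟩
  smul_mem' := by
    rintro a φ ⟨hφ0, p, hp, hpe⟩
    exact ⟨fun e he => by simp [hφ0 e he], fun v => a • p v,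
      fun v => lt_of_le_of_lt (Polynomial.degree_smul_le _ _) (hp v),
      fun v w hvw => by simp [hpe v w hvw]⟩

/-!
A function `φ ∈ W^r_{G,c}` that vanishes on `r` edges at a vertex `v` forces the polynomial `p_v`
of degree `< r` to have `r` distinct roots (the colours of those edges are distinct), so `p_v = 0`
and `φ` vanishes on every edge at `v`. Hence the zero set of `φ` is closed under the `r`-bond
infection rule, so restriction to a percolating set is injective on `W^r_{G,c}`.
-/

lemma Polynomial.eq_zero_of_degree_lt_of_ncard_le {R : Type*} [CommRing R] [IsDomain R]
    {p : R[X]} {r : ℕ} (hd : p.degree < r) {T : Set R} (hT : r ≤ T.ncard)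
    (h : ∀ x ∈ T, p.eval x = 0) : p = 0 := by
  rcases T.finite_or_infinite with hfin | hinf
  · lift T to Finset R using hfin
    exact eq_zero_of_degree_lt_of_eval_finset_eq_zero T (hd.trans_le (by simpa using hT)) h
  · exact eq_zero_of_infinite_isRoot p (hinf.mono h)

section

variable {V : Type*} {G : SimpleGraph V} {r : ℕ} {c : Sym2 V → ℝ}

lemma ProperEdgeColouring.injOn_neighborSet (hc : ProperEdgeColouring G c) (v : V) :
    Set.InjOn (fun u => c s(v, u)) (G.neighborSet v) := by
  intro u hu u' hu' hcc
  by_contra hne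
  refine hc s(v, u) hu s(v, u') hu' ?_ ⟨v, Sym2.mem_mk_left _ _, Sym2.mem_mk_left _ _⟩ hcc
  rw [Ne, Sym2.eq_iff]
  rintro (⟨-, rfl⟩ | ⟨-, rfl⟩)
  · exact hne rfl
  · exact G.irrefl hu

lemma bondClosed_zeroSet_of_mem_Wspace (hc : ProperEdgeColouring G c) {φ : Sym2 V → ℝ}
    (hφ : φ ∈ Wspace G c r) : BondClosed G r {e | φ e = 0} := by
  obtain ⟨-, p, hdeg, heval⟩ := hφ
  intro v hv w hvw
  have hpv : p v = 0 := by
    refine Polynomial.eq_zero_of_degree_lt_of_ncard_le (hdeg v)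
      (T := (fun u => c s(v, u)) '' {u | G.Adj v u ∧ φ s(v, u) = 0}) ?_ ?_
    · rwa [((hc.injOn_neighborSet v).mono fun _ hu => hu.1).ncard_image]
    · rintro _ ⟨u, ⟨hvu, hφu⟩, rfl⟩
      rw [heval v u hvu, hφu]
  show φ s(v, w) = 0
  rw [← heval v w hvw, hpv, eval_zero]

lemma eq_zero_of_mem_Wspace_of_bondPercolates (hc : ProperEdgeColouring G c)
    {φ : Sym2 V → ℝ} (hφ : φ ∈ Wspace G c r) {F : Set (Sym2 V)} (hF : BondPercolates G r F)
    (hφF : ∀ e ∈ F, φ e = 0) : φ = 0 := by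
  funext e
  by_cases he : e ∈ G.edgeSet
  · exact hF _ hφF (bondClosed_zeroSet_of_mem_Wspace hc hφ) he
  · exact hφ.1 e he

lemma finrank_Wspace_le_card (hc : ProperEdgeColouring G c) {F : Finset (Sym2 V)}
    (hF : BondPercolates G r F) : Module.finrank ℝ (Wspace G c r) ≤ F.card := by
  let restrict : Wspace G c r →ₗ[ℝ] (F → ℝ) :=
    (LinearMap.funLeft ℝ ℝ ((↑) : F → Sym2 V)).comp (Wspace G c r).subtype
  have hinj : Function.Injective restrict := by
    rw [injective_iff_map_eq_zero]
    intro φ hφ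
    exact Subtype.ext <| eq_zero_of_mem_Wspace_of_bondPercolates hc φ.2 hF
      fun e he => congr_fun hφ ⟨e, he⟩
  calc Module.finrank ℝ (Wspace G c r)
      ≤ Module.finrank ℝ (F → ℝ) := LinearMap.finrank_le_finrank_of_injective hinj
    _ = F.card := by simp

lemma exists_bondPercolates_card_eq_mEdge (hE : G.edgeSet.Finite) :
    ∃ F : Finset (Sym2 V), ↑F ⊆ G.edgeSet ∧ BondPercolates G r ↑F ∧ F.card = mEdge G r :=
  Nat.sInf_mem (s := {n | ∃ F : Finset (Sym2 V), (F : Set (Sym2 V)) ⊆ G.edgeSet ∧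
    BondPercolates G r F ∧ F.card = n})
    ⟨_, hE.toFinset, by simp, fun _ hS _ => by simpa using hS, rfl⟩

end

/-- For a finite simple graph `G`, `r ≥ 0`, and a proper edge colouring `c`,
`m_e(G,r) ≥ dim W^r_{G,c}`. -/
theorem stmt2 {V : Type*} [Fintype V] (G : SimpleGraph V) (r : ℕ) (c : Sym2 V → ℝ)
    (hc : ProperEdgeColouring G c) :
    Module.finrank ℝ (Wspace G c r) ≤ mEdge G r := by
  obtain ⟨F, -, hF, hcard⟩ := exists_bondPercolates_card_eq_mEdge (r := r) G.edgeSet.toFinite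
  exact hcard ▸ finrank_Wspace_le_card hc hF
end

section
/- Let H = (V,E) be a finite hypergraph (E a collection of subsets of V), let r ≥ 0 be an integer, and let c : V → ℝ be a colouring that assigns distinct values to the vertices within each hyperedge. Let W be the real vector space of all functions φ : V → ℝ for which there exist real univariate polynomials p_S (S ∈ E), each of degree at most r−1 (for r = 0 this forces p_S = 0), such that p_S(c(v)) = φ(v) for every S ∈ E and every v ∈ S. Consider the process in which one starts with a set A ⊆ V of infected vertices and, at each step, if some hyperedge S ∈ E contains at least r infected vertices, then all vertices of S become infected; A percolates if eventually every vertex of V is infected. Then the minimum size of a percolating set A is at least dim(W). -/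
open Polynomial

/-- A set `T` of vertices is closed under the `r`-infection rule of the hypergraph with
hyperedge collection `E`: if a hyperedge contains at least `r` vertices of `T`, then all of
its vertices are in `T`. -/
def HyperClosed {V : Type*} (E : Set (Set V)) (r : ℕ) (T : Set V) : Prop :=
  ∀ S ∈ E, r ≤ (S ∩ T).ncard → S ⊆ T

/-- `A` percolates: every closed set of vertices containing `A` is all of `V`. -/
def HyperPercolates {V : Type*} (E : Set (Set V)) (r : ℕ) (A : Set V) : Prop :=
  ∀ T : Set V, A ⊆ T → HyperClosed E r T → ∀ v : V, v ∈ T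

/-- The space `W` of functions `φ : V → ℝ` recognized by polynomials `p_S` of degree at most
`r - 1` (i.e. degree `< r`) attached to the hyperedges: `p_S(c v) = φ v` for all `S ∈ E` and
`v ∈ S`. -/
noncomputable def hyperW {V : Type*} (E : Set (Set V)) (c : V → ℝ) (r : ℕ) :
    Submodule ℝ (V → ℝ) where
  carrier := {φ | ∃ p : Set V → ℝ[X], (∀ S, (p S).degree < (r : WithBot ℕ)) ∧
    ∀ S ∈ E, ∀ v ∈ S, (p S).eval (c v) = φ v}
  zero_mem' := ⟨fun _ => 0,
    fun _ => by simp [Polynomial.degree_zero],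
    fun _ _ _ _ => by simp⟩
  add_mem' := by
    rintro φ ψ ⟨p, hp, hpe⟩ ⟨q, hq, hqe⟩
    exact ⟨fun S => p S + q S,
      fun S => lt_of_le_of_lt (Polynomial.degree_add_le _ _) (max_lt (hp S) (hq S)),
      fun S hS v hv => by simp [hpe S hS v hv, hqe S hS v hv]⟩
  smul_mem' := by
    rintro a φ ⟨p, hp, hpe⟩
    exact ⟨fun S => a • p S,
      fun S => lt_of_le_of_lt (Polynomial.degree_smul_le _ _) (hp S),
      fun S hS v hv => by simp [hpe S hS v hv]⟩

/-!
The zero set of any `φ ∈ W` is closed under infection: if a hyperedge `S` contains `r` zeros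
of `φ`, the polynomial `p_S`, of degree `< r`, vanishes at `r` distinct points and so is zero,
whence `φ` vanishes on all of `S`. A percolating set `A` therefore forces every `φ ∈ W`
vanishing on `A` to vanish everywhere, i.e. restriction to `A` is injective on `W`.
-/

theorem Polynomial.eq_zero_of_degree_lt_ncard_of_eval_eq_zero {R ι : Type*} [CommRing R]
    [IsDomain R] {p : R[X]} {v : ι → R} {s : Set ι} (hv : Set.InjOn v s)
    (hdeg : p.degree < s.ncard) (heval : ∀ i ∈ s, p.eval (v i) = 0) : p = 0 := by
  rcases s.finite_or_infinite with hs | hs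
  · lift s to Finset ι using hs
    rw [Set.ncard_coe_finset] at hdeg
    exact eq_zero_of_degree_lt_of_eval_index_eq_zero _ hv hdeg heval
  · refine p.eq_zero_of_infinite_isRoot ((hs.image hv).mono ?_)
    rintro _ ⟨i, hi, rfl⟩
    exact heval i hi

theorem Submodule.finrank_le_card_of_eqOn_zero {K V : Type*} [Field K] (W : Submodule K (V → K))
    (A : Finset V) (hA : ∀ φ ∈ W, Set.EqOn φ 0 A → φ = 0) :
    Module.finrank K W ≤ A.card := by
  let restrict : W →ₗ[K] (A → K) := (LinearMap.funLeft K K ((↑) : A → V)).comp W.subtype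
  have hinj : Function.Injective restrict := by
    rw [← LinearMap.ker_eq_bot, LinearMap.ker_eq_bot']
    rintro ⟨φ, hφ⟩ hzero
    exact Subtype.ext (hA φ hφ fun a ha => congrFun hzero ⟨a, ha⟩)
  simpa using LinearMap.finrank_le_finrank_of_injective hinj

section Percolation

variable {V : Type*} {E : Set (Set V)} {r : ℕ} {c : V → ℝ}

theorem hyperClosed_setOf_eq_zero (hc : ∀ S ∈ E, Set.InjOn c S) {φ : V → ℝ}
    (hφ : φ ∈ hyperW E c r) : HyperClosed E r {v | φ v = 0} := by
  obtain ⟨p, hdeg, heval⟩ := hφ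
  intro S hS hcard v hv
  have hpS : p S = 0 := by
    refine eq_zero_of_degree_lt_ncard_of_eval_eq_zero ((hc S hS).mono Set.inter_subset_left)
      ((hdeg S).trans_le (by exact_mod_cast hcard)) ?_
    rintro u ⟨huS, hu⟩
    rw [heval S hS u huS]
    exact hu
  simpa [hpS] using (heval S hS v hv).symm

theorem HyperPercolates.eq_zero_of_eqOn_zero {A : Set V} (hA : HyperPercolates E r A)
    (hc : ∀ S ∈ E, Set.InjOn c S) {φ : V → ℝ} (hφ : φ ∈ hyperW E c r)
    (hzero : Set.EqOn φ 0 A) : φ = 0 :=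
  funext (hA _ hzero (hyperClosed_setOf_eq_zero hc hφ))

end Percolation

theorem stmt16_general {V : Type*} (E : Set (Set V)) (r : ℕ) (c : V → ℝ)
    (hc : ∀ S ∈ E, Set.InjOn c S) (A : Finset V) (hA : HyperPercolates E r ↑A) :
    Module.finrank ℝ (hyperW E c r) ≤ A.card :=
  (hyperW E c r).finrank_le_card_of_eqOn_zero A fun _ hφ => hA.eq_zero_of_eqOn_zero hc hφ

/-- Let `H = (V, E)` be a finite hypergraph, `r ≥ 0`, and let `c : V → ℝ`
assign distinct values to the vertices within each hyperedge. Then every percolating set of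
vertices has size at least `dim W`. -/
theorem stmt16 {V : Type*} [Fintype V] (E : Set (Set V)) (r : ℕ) (c : V → ℝ)
    (hc : ∀ S ∈ E, Set.InjOn c S) (A : Finset V) (hA : HyperPercolates E r ↑A) :
    Module.finrank ℝ (hyperW E c r) ≤ A.card :=
  stmt16_general E r c hc A hA
end
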